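/- arXiv:2604.03856 — 2 statements merged into one kernel-verified Lean document; each statement's English description precedes it below -/
import Mathlib

section
/- (Solvability of the Galerkin system) Let m ∈ ℕ, let α > 0, let λ₁, …, λ_m be positive real numbers, and let b₁, …, b_m be arbitrary real numbers. Then there exists ξ = (ξ₁, …, ξ_m) ∈ ℝ^m such that for every i ∈ {1, …, m}: α²·λ_i·ξ_i + ξ_i + α·(Σ_{j=1}^m λ_j·ξ_j²)·λ_i·ξ_i = b_i. -/
/-!
Writing `S = ∑ⱼ λⱼ ξⱼ²`, the `i`-th equation reads `(α² λᵢ + 1 + α S λᵢ) ξᵢ = bᵢ`, so for a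
prescribed value `S = s ≥ 0` it is solved by `ξᵢ = bᵢ / (α² λᵢ + 1 + α s λᵢ)`. The system is thus
equivalent to the scalar fixed-point equation `s = E s` for the energy `E s = ∑ⱼ λⱼ ξⱼ(s)²`. As `E`
is continuous, nonnegative and antitone on `[0, ∞)`, the intermediate value theorem applied to
`s - E s` on `[0, E 0]` produces a fixed point.
-/

open Set

theorem exists_fixedPoint_of_antitoneOn_Ici {F : ℝ → ℝ} {a : ℝ} (hcont : ContinuousOn F (Ici a))
    (hmaps : MapsTo F (Ici a) (Ici a)) (hanti : AntitoneOn F (Ici a)) :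
    ∃ s ∈ Ici a, F s = s := by
  have ha : a ≤ F a := hmaps self_mem_Ici
  have hFFa : F (F a) ≤ F a := hanti self_mem_Ici ha ha
  have hsub : ContinuousOn (fun s => s - F s) (Icc a (F a)) :=
    (continuousOn_id.sub hcont).mono Icc_subset_Ici_self
  obtain ⟨s, hs, hs0⟩ := intermediate_value_Icc ha hsub
    (show (0 : ℝ) ∈ Icc (a - F a) (F a - F (F a)) from ⟨by linarith, by linarith⟩)
  exact ⟨s, hs.1, by linarith [show s - F s = 0 from hs0]⟩

namespace Galerkin

theorem one_le_denom {α l s : ℝ} (hα : 0 ≤ α) (hl : 0 ≤ l) (hs : 0 ≤ s) :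
    1 ≤ α ^ 2 * l + 1 + α * s * l := by
  have : 0 ≤ α * s * l := by positivity
  nlinarith [sq_nonneg α]

variable {ι : Type*} [Fintype ι] (α : ℝ) (lam b : ι → ℝ)

noncomputable def frozenSolution (s : ℝ) (j : ι) : ℝ :=
  b j / (α ^ 2 * lam j + 1 + α * s * lam j)

noncomputable def energy (s : ℝ) : ℝ :=
  ∑ j, lam j * frozenSolution α lam b s j ^ 2

variable {α lam}

theorem energy_nonneg (hlam : ∀ j, 0 ≤ lam j) (s : ℝ) : 0 ≤ energy α lam b s :=
  Finset.sum_nonneg fun j _ => mul_nonneg (hlam j) (sq_nonneg _)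

theorem antitoneOn_energy (hα : 0 ≤ α) (hlam : ∀ j, 0 ≤ lam j) :
    AntitoneOn (energy α lam b) (Ici 0) := by
  intro s hs t ht hst
  refine Finset.sum_le_sum fun j _ => ?_
  have hds := one_le_denom hα (hlam j) hs
  have hmono : α * s * lam j ≤ α * t * lam j := by gcongr; exacts [hlam j]
  simp only [frozenSolution, div_pow]
  gcongr
  · exact hlam j

theorem continuousOn_energy (hα : 0 ≤ α) (hlam : ∀ j, 0 ≤ lam j) :
    ContinuousOn (energy α lam b) (Ici 0) := by
  refine continuousOn_finsetSum _ fun j _ => continuousOn_const.mul (ContinuousOn.pow ?_ 2)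
  refine continuousOn_const.div (by fun_prop) fun s hs => ?_
  exact (zero_lt_one.trans_le (one_le_denom hα (hlam j) hs)).ne'

theorem frozenSolution_solves (hα : 0 ≤ α) (hlam : ∀ j, 0 ≤ lam j) {s : ℝ} (hs : 0 ≤ s)
    (hfix : energy α lam b s = s) (i : ι) :
    let ξ := frozenSolution α lam b s
    α ^ 2 * lam i * ξ i + ξ i + α * (∑ j, lam j * ξ j ^ 2) * lam i * ξ i = b i := by
  have hd := (zero_lt_one.trans_le (one_le_denom hα (hlam i) hs)).ne'
  change _ + _ + α * energy α lam b s * lam i * _ = _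
  rw [hfix, frozenSolution]
  linear_combination mul_div_cancel₀ (b i) hd

end Galerkin

open Galerkin in
/-- Solvability of the Galerkin system: for `α > 0`, positive `λ₁,…,λ_m` and arbitrary
`b₁,…,b_m`, there exists `ξ ∈ ℝ^m` with
`α² λᵢ ξᵢ + ξᵢ + α (Σⱼ λⱼ ξⱼ²) λᵢ ξᵢ = bᵢ` for every `i`. -/
theorem galerkin_system_solvable (m : ℕ) (α : ℝ) (hα : 0 < α)
    (lam : Fin m → ℝ) (hlam : ∀ i, 0 < lam i) (b : Fin m → ℝ) :
    ∃ ξ : Fin m → ℝ, ∀ i : Fin m,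
      α ^ 2 * lam i * ξ i + ξ i + α * (∑ j, lam j * (ξ j) ^ 2) * lam i * ξ i = b i := by
  have hlam' : ∀ i, 0 ≤ lam i := fun i => (hlam i).le
  obtain ⟨s, hs, hfix⟩ := exists_fixedPoint_of_antitoneOn_Ici
    (continuousOn_energy b hα.le hlam')
    (fun s _ => energy_nonneg b hlam' s) (antitoneOn_energy b hα.le hlam')
  exact ⟨frozenSolution α lam b s, frozenSolution_solves b hα.le hlam' hs hfix⟩
end

section
/- (Single-valuedness and uniform continuity of the duality map on bounded sets) Let X be a real normed space whose topological dual X' is uniformly convex. For x ∈ X call f ∈ X' an element of F x if f(x) = ‖x‖² and ‖f‖ = ‖x‖. Then for every ε > 0 and M > 0 there exists δ > 0 such that for all x, y ∈ X with ‖x‖ < M and ‖x − y‖ < δ, and all continuous linear functionals f, g on X with f(x) = ‖x‖², ‖f‖ = ‖x‖, g(y) = ‖y‖², ‖g‖ = ‖y‖, one has ‖f − g‖ < ε. In particular (taking x = y), F x contains at most one element, i.e., F is single-valued. -/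
/-!
Normalise `f ∈ F x` and `g ∈ F y` to `u = ‖x‖⁻¹ • f` and `v = ‖y‖⁻¹ • g` in the unit ball
of `X'`. Since `u x = ‖x‖` and `v y = ‖y‖`, evaluating at `x` gives
`‖u + v‖ ‖x‖ ≥ 2 ‖x‖ - 2 ‖x - y‖`, so for `‖x‖` bounded below, `‖u + v‖` is close to `2` and
uniform convexity of `X'` makes `‖u - v‖` small. Finally `‖f - g‖ ≤ ‖x‖ ‖u - v‖ + ‖x - y‖`,
which is also small when `‖x‖` is small.
-/

section DualityMap

variable {X : Type*} [NormedAddCommGroup X] [NormedSpace ℝ X]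

def dualityMap (x : X) : Set (StrongDual ℝ X) :=
  {f | f x = ‖x‖ ^ 2 ∧ ‖f‖ = ‖x‖}

variable {x y : X} {f g : StrongDual ℝ X}

lemma norm_smul_inv_norm_smul_of_mem_dualityMap (hf : f ∈ dualityMap x) :
    ‖x‖ • ‖x‖⁻¹ • f = f := by
  rcases eq_or_ne ‖x‖ 0 with hx | hx
  · rw [hx, zero_smul, eq_comm, ← norm_eq_zero, hf.2, hx]
  · rw [smul_smul, mul_inv_cancel₀ hx, one_smul]

lemma norm_inv_norm_smul_le_one_of_mem_dualityMap (hf : f ∈ dualityMap x) :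
    ‖‖x‖⁻¹ • f‖ ≤ 1 := by
  rw [norm_smul, norm_inv, norm_norm, hf.2]
  exact inv_mul_le_one

lemma inv_norm_smul_apply_self_of_mem_dualityMap (hf : f ∈ dualityMap x) :
    (‖x‖⁻¹ • f) x = ‖x‖ := by
  rw [smul_apply, hf.1, smul_eq_mul]
  rcases eq_or_ne ‖x‖ 0 with hx | hx
  · simp [hx]
  · field_simp

lemma two_mul_sub_le_norm_add_mul {u v : StrongDual ℝ X} (hu : u x = ‖x‖) (hv : ‖v‖ ≤ 1)
    (hvy : v y = ‖y‖) : 2 * ‖x‖ - 2 * ‖x - y‖ ≤ ‖u + v‖ * ‖x‖ := by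
  have hv_sub : -‖x - y‖ ≤ v (x - y) :=
    neg_le_of_abs_le ((v.le_opNorm _).trans (mul_le_of_le_one_left (norm_nonneg _) hv))
  have hy : ‖x‖ - ‖x - y‖ ≤ ‖y‖ := by linarith [norm_sub_norm_le x y]
  calc 2 * ‖x‖ - 2 * ‖x - y‖ ≤ u x + v y + v (x - y) := by linarith
    _ = (u + v) x := by rw [map_sub]; simp only [add_apply]; ring
    _ ≤ ‖u + v‖ * ‖x‖ := le_of_abs_le ((u + v).le_opNorm x)

lemma norm_sub_le_of_mem_dualityMap (hf : f ∈ dualityMap x) (hg : g ∈ dualityMap y) :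
    ‖f - g‖ ≤ ‖x‖ * ‖‖x‖⁻¹ • f - ‖y‖⁻¹ • g‖ + ‖x - y‖ := by
  set u := ‖x‖⁻¹ • f
  set v := ‖y‖⁻¹ • g
  have hsplit : f - g = ‖x‖ • (u - v) + (‖x‖ - ‖y‖) • v := by
    rw [← norm_smul_inv_norm_smul_of_mem_dualityMap hf,
      ← norm_smul_inv_norm_smul_of_mem_dualityMap hg]
    module
  calc ‖f - g‖ ≤ ‖x‖ * ‖u - v‖ + |‖x‖ - ‖y‖| * ‖v‖ := by
        rw [hsplit]
        refine (norm_add_le _ _).trans_eq ?_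
        rw [norm_smul, norm_smul, norm_norm, Real.norm_eq_abs]
    _ ≤ ‖x‖ * ‖u - v‖ + ‖x - y‖ := by
        gcongr
        exact (mul_le_of_le_one_right (abs_nonneg _)
          (norm_inv_norm_smul_le_one_of_mem_dualityMap hg)).trans (abs_norm_sub_norm_le x y)

lemma exists_norm_inv_norm_smul_sub_lt [UniformConvexSpace (StrongDual ℝ X)] {ε η : ℝ}
    (hε : 0 < ε) (hη : 0 < η) :
    ∃ δ > 0, ∀ ⦃x y : X⦄ ⦃f g : StrongDual ℝ X⦄, η ≤ ‖x‖ → ‖x - y‖ < δ →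
      f ∈ dualityMap x → g ∈ dualityMap y → ‖‖x‖⁻¹ • f - ‖y‖⁻¹ • g‖ < ε := by
  obtain ⟨δ, hδ, huc⟩ := exists_forall_closed_ball_dist_add_le_two_sub (StrongDual ℝ X) hε
  refine ⟨δ * η / 2, by positivity, fun x y f g hx hxy hf hg => lt_of_not_ge fun hfar => ?_⟩
  have hu := norm_inv_norm_smul_le_one_of_mem_dualityMap hf
  have hv := norm_inv_norm_smul_le_one_of_mem_dualityMap hg
  have hupper := mul_le_mul_of_nonneg_right (huc hu hv hfar) (norm_nonneg x)
  have hlower := two_mul_sub_le_norm_add_mul (inv_norm_smul_apply_self_of_mem_dualityMap hf) hv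
    (inv_norm_smul_apply_self_of_mem_dualityMap hg)
  -- `(2 - δ) ‖x‖ ≥ 2 ‖x‖ - 2 ‖x - y‖ > 2 ‖x‖ - δ η ≥ (2 - δ) ‖x‖`
  nlinarith

end DualityMap

/-- Single-valuedness and uniform continuity of the duality map on bounded sets:
if the topological dual of a real normed space `X` is uniformly convex, then for every
`ε > 0` and `M > 0` there is `δ > 0` such that whenever `‖x‖ < M`, `‖x − y‖ < δ`,
and `f, g` are continuous linear functionals with `f x = ‖x‖²`, `‖f‖ = ‖x‖`,
`g y = ‖y‖²`, `‖g‖ = ‖y‖`, one has `‖f − g‖ < ε`. In particular (taking `x = y`)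
the duality map is single-valued. -/
theorem duality_map_uniformly_continuous {X : Type*} [NormedAddCommGroup X]
    [NormedSpace ℝ X] [UniformConvexSpace (StrongDual ℝ X)] :
    ∀ ε > (0 : ℝ), ∀ M > (0 : ℝ), ∃ δ > (0 : ℝ),
      ∀ (x y : X) (f g : StrongDual ℝ X),
        ‖x‖ < M → ‖x - y‖ < δ →
        f x = ‖x‖ ^ 2 → ‖f‖ = ‖x‖ →
        g y = ‖y‖ ^ 2 → ‖g‖ = ‖y‖ →
        ‖f - g‖ < ε := by
  intro ε hε M hM
  obtain ⟨δ, hδ, hnormalized⟩ :=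
    exists_norm_inv_norm_smul_sub_lt (X := X) (by positivity : 0 < ε / (2 * M))
      (by positivity : 0 < ε / 4)
  refine ⟨min δ (ε / 2), by positivity, fun x y f g hxM hxy hfx hfn hgy hgn => ?_⟩
  have hf : f ∈ dualityMap x := ⟨hfx, hfn⟩
  have hg : g ∈ dualityMap y := ⟨hgy, hgn⟩
  have hscaled : ‖x‖ * ‖‖x‖⁻¹ • f - ‖y‖⁻¹ • g‖ < ε / 2 := by
    rcases lt_or_ge ‖x‖ (ε / 4) with hsmall | hlarge
    · have hdiam : ‖‖x‖⁻¹ • f - ‖y‖⁻¹ • g‖ ≤ 2 :=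
        (norm_sub_le _ _).trans (by linarith [norm_inv_norm_smul_le_one_of_mem_dualityMap hf,
          norm_inv_norm_smul_le_one_of_mem_dualityMap hg])
      nlinarith [norm_nonneg x]
    · calc ‖x‖ * ‖‖x‖⁻¹ • f - ‖y‖⁻¹ • g‖ ≤ M * ‖‖x‖⁻¹ • f - ‖y‖⁻¹ • g‖ := by gcongr
        _ < M * (ε / (2 * M)) := by
          gcongr
          exact hnormalized hlarge (hxy.trans_le (min_le_left _ _)) hf hg
        _ = ε / 2 := by field_simp
  linarith [norm_sub_le_of_mem_dualityMap hf hg, hxy.trans_le (min_le_right δ (ε / 2))]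
end
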